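/- In the partial linear regression model, for any θ, h ∈ ℝ, n ≥ 1 and η, the squared Hellinger distance satisfies H²(P_{θ₀+h/√n, η}, P_{θ₀, η}) ≤ (h²/(2n)) E U² + (|h|³/(6n²)) E U⁴; in particular, if E U² < ∞, E U⁴ < ∞ and |h| ≤ M, then H²(P_{θ₀+h/√n, η}, P_{θ₀, η}) = O(1/n) uniformly in η. -/

import Mathlib

open MeasureTheory ProbabilityTheory Real

/-!
Writing `a = h / (2 √n)`, the integrand is `exp Z` with `Z = a e U - a² U²`. Since
`exp z ≥ 1 + z` and `E[e U] = E e · E U = 0` by independence, the affinity is at least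
`1 - a² E U²`, i.e. `2 (1 - affinity) ≤ (h² / 2n) E U²`, so the quartic term of the bound is
slack. Integrability of `exp Z` comes from completing the square, `Z ≤ e² / 4`, and the
Gaussian tail of `e`.
-/

lemma integrable_exp_mul_sq_gaussianReal {c : ℝ} (hc : c < 1 / 2) :
    Integrable (fun x => rexp (c * x ^ 2)) (gaussianReal 0 1) := by
  rw [gaussianReal_of_var_ne_zero _ one_ne_zero, integrable_withDensity_iff_integrable_smul'
    (measurable_gaussianPDF 0 1) (.of_forall fun _ => gaussianPDF_lt_top)]
  have hdensity : (fun x => (gaussianPDF 0 1 x).toReal • rexp (c * x ^ 2))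
      = fun x => (√(2 * π))⁻¹ * rexp (-(1 / 2 - c) * x ^ 2) := by
    ext x
    rw [toReal_gaussianPDF, gaussianPDFReal, smul_eq_mul, mul_assoc, ← exp_add]
    simp only [NNReal.coe_one, mul_one, sub_zero]
    congr 2
    ring
  rw [hdensity]
  exact (integrable_exp_neg_mul_sq (by linarith)).const_mul _

lemma ProbabilityTheory.HasLaw.integrable_comp {Ω 𝓧 E : Type*} [MeasurableSpace Ω]
    [MeasurableSpace 𝓧] [NormedAddCommGroup E] {P : Measure Ω} {μ : Measure 𝓧} {X : Ω → 𝓧}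
    (hX : HasLaw X μ P) {f : 𝓧 → E} (hf : Integrable f μ) : Integrable (f ∘ X) P :=
  (hX.map_eq ▸ hf).comp_aemeasurable hX.aemeasurable

section

variable {Ω : Type*} [MeasurableSpace Ω] {P : Measure Ω} [IsProbabilityMeasure P]

lemma one_add_integral_le_integral_exp {Z : Ω → ℝ} (hZ : Integrable Z P)
    (hexpZ : Integrable (fun ω => rexp (Z ω)) P) :
    1 + ∫ ω, Z ω ∂P ≤ ∫ ω, rexp (Z ω) ∂P := by
  calc 1 + ∫ ω, Z ω ∂P = ∫ ω, (Z ω + 1) ∂P := by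
        rw [integral_add hZ (integrable_const 1)]; simp [add_comm]
    _ ≤ ∫ ω, rexp (Z ω) ∂P := integral_mono (hZ.add (integrable_const 1)) hexpZ
        fun ω => add_one_le_exp (Z ω)

lemma one_sub_sq_mul_integral_sq_le_integral_exp {U e : Ω → ℝ} (hU : AEMeasurable U P)
    (he : HasLaw e (gaussianReal 0 1) P) (hindep : IndepFun e U P)
    (hU2 : Integrable (fun ω => U ω ^ 2) P) (a : ℝ) :
    1 - a ^ 2 * ∫ ω, U ω ^ 2 ∂P ≤ ∫ ω, rexp (a * (e ω * U ω) - a ^ 2 * U ω ^ 2) ∂P := by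
  have hintU : Integrable U P :=
    ((memLp_two_iff_integrable_sq hU.aestronglyMeasurable).mpr hU2).integrable one_le_two
  have hinte : Integrable e P :=
    he.integrable_comp ((memLp_id_gaussianReal 1).integrable le_rfl)
  have hintEU : Integrable (fun ω => e ω * U ω) P := hindep.integrable_mul hinte hintU
  have hmean : ∫ ω, e ω * U ω ∂P = 0 := by
    rw [hindep.integral_fun_mul_eq_mul_integral hinte.1 hintU.1, he.integral_eq,
      integral_id_gaussianReal, zero_mul]
  have hexp_sq : Integrable (fun ω => rexp (1 / 4 * e ω ^ 2)) P :=
    he.integrable_comp (integrable_exp_mul_sq_gaussianReal (by norm_num))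
  have hexpZ : Integrable (fun ω => rexp (a * (e ω * U ω) - a ^ 2 * U ω ^ 2)) P := by
    refine hexp_sq.mono' ?_ (.of_forall fun ω => ?_)
    · fun_prop
    · rw [norm_of_nonneg (exp_nonneg _), exp_le_exp]
      nlinarith [sq_nonneg (e ω / 2 - a * U ω)]
  have := one_add_integral_le_integral_exp (Z := fun ω => a * (e ω * U ω) - a ^ 2 * U ω ^ 2)
    ((hintEU.const_mul a).sub (hU2.const_mul _)) hexpZ
  rwa [integral_sub (hintEU.const_mul a) (hU2.const_mul _), integral_const_mul,
    integral_const_mul, hmean, mul_zero, zero_sub, ← sub_eq_add_neg] at this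

end

theorem plr_hellinger_bound_general {Ω : Type*} [MeasurableSpace Ω]
    (P : Measure Ω) [IsProbabilityMeasure P]
    (U e : Ω → ℝ) (hU : Measurable U)
    (hlaw : Measure.map e P = gaussianReal 0 1) (hindep : IndepFun e U P)
    (hU2 : Integrable (fun ω => U ω ^ 2) P) :
    (∀ (n : ℕ), 1 ≤ n → ∀ h : ℝ,
      2 * (1 - ∫ ω, exp ((h / (2 * Real.sqrt n)) * (e ω * U ω)
            - (h ^ 2 / (4 * n)) * U ω ^ 2) ∂P)
        ≤ (h ^ 2 / (2 * n)) * ∫ ω, U ω ^ 2 ∂P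
          + (|h| ^ 3 / (6 * (n : ℝ) ^ 2)) * ∫ ω, U ω ^ 4 ∂P) ∧
    (∀ M : ℝ, 0 < M → ∃ C : ℝ, ∀ (n : ℕ), 1 ≤ n → ∀ h : ℝ, |h| ≤ M →
      2 * (1 - ∫ ω, exp ((h / (2 * Real.sqrt n)) * (e ω * U ω)
            - (h ^ 2 / (4 * n)) * U ω ^ 2) ∂P) ≤ C / n) := by
  have he : HasLaw e (gaussianReal 0 1) P :=
    ⟨.of_map_ne_zero (hlaw ▸ IsProbabilityMeasure.ne_zero _), hlaw⟩
  have hbound (n : ℕ) (h : ℝ) :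
      2 * (1 - ∫ ω, exp ((h / (2 * Real.sqrt n)) * (e ω * U ω)
            - (h ^ 2 / (4 * n)) * U ω ^ 2) ∂P)
        ≤ (h ^ 2 / (2 * n)) * ∫ ω, U ω ^ 2 ∂P := by
    have hsq : (h / (2 * √n)) ^ 2 = h ^ 2 / (4 * n) := by
      rw [div_pow, mul_pow, sq_sqrt (Nat.cast_nonneg n)]
      norm_num
    have := one_sub_sq_mul_integral_sq_le_integral_exp hU.aemeasurable he hindep hU2
      (h / (2 * √n))
    rw [hsq] at this
    linarith [show h ^ 2 / (2 * n) * ∫ ω, U ω ^ 2 ∂P = 2 * (h ^ 2 / (4 * n) * ∫ ω, U ω ^ 2 ∂P)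
      by ring]
  refine ⟨fun n _ h => (hbound n h).trans (le_add_of_nonneg_right (by positivity)),
    fun M _ => ⟨M ^ 2 / 2 * ∫ ω, U ω ^ 2 ∂P, fun n _ h hhM => (hbound n h).trans ?_⟩⟩
  have hh2 : h ^ 2 ≤ M ^ 2 := sq_le_sq.mpr (hhM.trans (le_abs_self M))
  calc h ^ 2 / (2 * n) * ∫ ω, U ω ^ 2 ∂P = (h ^ 2 / 2 * ∫ ω, U ω ^ 2 ∂P) / n := by ring
    _ ≤ (M ^ 2 / 2 * ∫ ω, U ω ^ 2 ∂P) / n := by gcongr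

/-- Hellinger bound in partial linear regression (Bickel–Kleijn, Thm 7.1): since
`(p_{θ₀+h/√n,η}/p_{θ₀,η})^{1/2}(X) = exp((h/2√n) e U - (h²/4n) U²)` with `e ~ N(0,1)`
independent of `U`, the squared Hellinger distance `H² = 2(1 - affinity)` satisfies the
η-independent bound `H² ≤ (h²/2n) EU² + (|h|³/6n²) EU⁴`, hence is `O(1/n)` for `|h| ≤ M`. -/
theorem plr_hellinger_bound {Ω : Type*} [MeasurableSpace Ω]
    (P : Measure Ω) [IsProbabilityMeasure P]
    (U e : Ω → ℝ) (hU : Measurable U) (he : Measurable e)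
    (hlaw : Measure.map e P = gaussianReal 0 1) (hindep : IndepFun e U P)
    (hU2 : Integrable (fun ω => U ω ^ 2) P) (hU4 : Integrable (fun ω => U ω ^ 4) P) :
    (∀ (n : ℕ), 1 ≤ n → ∀ h : ℝ,
      2 * (1 - ∫ ω, exp ((h / (2 * Real.sqrt n)) * (e ω * U ω)
            - (h ^ 2 / (4 * n)) * U ω ^ 2) ∂P)
        ≤ (h ^ 2 / (2 * n)) * ∫ ω, U ω ^ 2 ∂P
          + (|h| ^ 3 / (6 * (n : ℝ) ^ 2)) * ∫ ω, U ω ^ 4 ∂P) ∧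
    (∀ M : ℝ, 0 < M → ∃ C : ℝ, ∀ (n : ℕ), 1 ≤ n → ∀ h : ℝ, |h| ≤ M →
      2 * (1 - ∫ ω, exp ((h / (2 * Real.sqrt n)) * (e ω * U ω)
            - (h ^ 2 / (4 * n)) * U ω ^ 2) ∂P) ≤ C / n) :=
  plr_hellinger_bound_general P U e hU hlaw hindep hU2
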